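/- The key counting identity for parallel composition: with P1, P2 sharing public inputs p and secret inputs k but having disjoint randoms r1, r2, for any selection of nodes α from P1 ∥ P2 partitioned into α1 (nodes in P1) and α2 (nodes in P2) and corresponding value vectors v1, v2, the count satisfies C_{P1∥P2}(bp, bk, α, v) = C_{P1}(bp, bk, α1, v1) · C_{P2}(bp, bk, α2, v2). -/

import Mathlib

/-- The number of random assignments under which the selected nodes take the
given values, for a circuit modeled by its evaluation function. -/
def CCount {P K R Node ι : Type} [Fintype R] [DecidableEq R] [Fintype ι]
    (eval : (P → ZMod 2) → (K → ZMod 2) → (R → ZMod 2) → Node → ZMod 2)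
    (bp : P → ZMod 2) (bk : K → ZMod 2) (α : ι → Node) (v : ι → ZMod 2) : ℕ :=
  ((Finset.univ : Finset (R → ZMod 2)).filter
    (fun br => ∀ i, eval bp bk br (α i) = v i)).card

/-- Parallel composition: shared public and secret inputs, disjoint randoms,
disjoint node sets, each side evaluated with its own randoms. -/
def parEval {P K R1 R2 Node1 Node2 : Type}
    (eval1 : (P → ZMod 2) → (K → ZMod 2) → (R1 → ZMod 2) → Node1 → ZMod 2)
    (eval2 : (P → ZMod 2) → (K → ZMod 2) → (R2 → ZMod 2) → Node2 → ZMod 2) :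
    (P → ZMod 2) → (K → ZMod 2) → (R1 ⊕ R2 → ZMod 2) → Node1 ⊕ Node2 → ZMod 2 :=
  fun bp bk br => Sum.elim (eval1 bp bk (br ∘ Sum.inl)) (eval2 bp bk (br ∘ Sum.inr))

/-- n-leakage-resilience: for any selection of at most n nodes, the joint
value-count distribution is independent of the secret input. -/
def Resilient {P K R Node : Type} [Fintype R] [DecidableEq R] (n : ℕ)
    (eval : (P → ZMod 2) → (K → ZMod 2) → (R → ZMod 2) → Node → ZMod 2) : Prop :=
  ∀ (j : ℕ), j ≤ n → ∀ (bp : P → ZMod 2) (bk bk' : K → ZMod 2)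
    (α : Fin j → Node) (v : Fin j → ZMod 2),
    CCount eval bp bk α v = CCount eval bp bk' α v

open Finset

theorem Finset.card_filter_sum_arrow_eq_mul {α β γ : Type*} [Fintype α] [DecidableEq α]
    [Fintype β] [DecidableEq β] [Fintype γ]
    (p : (α → γ) → Prop) (q : (β → γ) → Prop) [DecidablePred p] [DecidablePred q] :
    #{f : α ⊕ β → γ | p (f ∘ Sum.inl) ∧ q (f ∘ Sum.inr)} = #{f | p f} * #{g | q g} := by
  rw [← card_product, ← filter_product]
  exact card_equiv (Equiv.sumArrowEquivProdArrow α β γ) fun _ => by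
    simp [Equiv.sumArrowEquivProdArrow]

/-- the counting identity for parallel composition: a selection
partitioned into nodes of P1 and nodes of P2 has a count that factorizes as the
product of the component counts. -/
theorem parallel_composition_count {P K R1 R2 Node1 Node2 ι1 ι2 : Type}
    [Fintype R1] [DecidableEq R1] [Fintype R2] [DecidableEq R2]
    [Fintype ι1] [Fintype ι2]
    (eval1 : (P → ZMod 2) → (K → ZMod 2) → (R1 → ZMod 2) → Node1 → ZMod 2)
    (eval2 : (P → ZMod 2) → (K → ZMod 2) → (R2 → ZMod 2) → Node2 → ZMod 2)
    (bp : P → ZMod 2) (bk : K → ZMod 2)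
    (α1 : ι1 → Node1) (α2 : ι2 → Node2)
    (v1 : ι1 → ZMod 2) (v2 : ι2 → ZMod 2) :
    CCount (parEval eval1 eval2) bp bk
        (Sum.elim (Sum.inl ∘ α1) (Sum.inr ∘ α2)) (Sum.elim v1 v2) =
      CCount eval1 bp bk α1 v1 * CCount eval2 bp bk α2 v2 := by
  simp only [CCount, ← card_filter_sum_arrow_eq_mul]
  congr 1
  ext br
  simp [parEval, Sum.forall]
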